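/- Completeness of quantitative deduction: for every quantitative definite clause program P and every atom a, if the minimal model value v = A a (where A is the pointwise supremum of the P-chain) satisfies v > 0, then Derives P a v holds, i.e., there is a proof tree for a from P with root value exactly v. -/

import Mathlib

/-!
Every positive value of the `P`-chain is the root value of a proof tree, by induction along the
chain. The values of the chain are products of factors of `P` (or `0`), and products of finitely
many factors in `[0, 1]` that stay above a fixed `δ > 0` have bounded exponents on the factors
below `1`, so there are only finitely many of them. Hence the increasing sequence `A_i a`, once
positive, takes only finitely many values and attains its supremum at some finite stage.
-/

/-- A quantitative definite clause: a head atom, a list of body atoms,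
and a numerical factor. -/
structure QClause (α : Type*) where
  head : α
  body : List α
  factor : ℝ

variable {α : Type*}

/-- The minimum of the values of an interpretation over a list of atoms,
with the empty list yielding 1. -/
def bodyMin (I : α → ℝ) (l : List α) : ℝ := (l.map I).foldr min 1

/-- A quantitative definite clause program: a finite set of clauses whose
factors lie in (0,1]. -/
def QProgram (P : Set (QClause α)) : Prop :=
  P.Finite ∧ ∀ c ∈ P, 0 < c.factor ∧ c.factor ≤ 1

/-- An interpretation assigns to each atom a value in [0,1]. -/
def IsInterp (I : α → ℝ) : Prop := ∀ a, 0 ≤ I a ∧ I a ≤ 1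

/-- An interpretation is a model of `P` iff it is an interpretation and for
every clause `(h, [b₁,…,b_k], f)` of `P`, `I h ≥ f * min {I b₁, …, I b_k}`. -/
def IsModel (P : Set (QClause α)) (I : α → ℝ) : Prop :=
  IsInterp I ∧ ∀ c ∈ P, c.factor * bodyMin I c.body ≤ I c.head

/-- The `P`-chain: `A₀ a = 0` and
`A_{i+1} a = sup { f * min {A_i b₁, …, A_i b_k} : (a,[b₁,…,b_k],f) ∈ P }`
(in ℝ, `sSup ∅ = 0`). -/
noncomputable def chain (P : Set (QClause α)) : ℕ → α → ℝ
  | 0, _ => 0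
  | i + 1, a =>
      sSup {x | ∃ c ∈ P, c.head = a ∧ x = c.factor * bodyMin (chain P i) c.body}

/-- Derivability (proof trees): `Derives P a v` holds iff there is a clause
`(a, [b₁,…,b_k], f) ∈ P` and values `v₁,…,v_k` with `Derives P bⱼ vⱼ` for each
`j` and `v = f * min {v₁, …, v_k}` (min over an empty list is 1). -/
inductive Derives (P : Set (QClause α)) : α → ℝ → Prop where
  | step (c : QClause α) (hc : c ∈ P) (vs : List ℝ) (hlen : vs.length = c.body.length)
      (hbody : ∀ i : ℕ, ∀ hb : i < c.body.length, ∀ hv : i < vs.length,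
        Derives P (c.body.get ⟨i, hb⟩) (vs.get ⟨i, hv⟩)) :
      Derives P c.head (c.factor * vs.foldr min 1)

open Set Filter

lemma Monotone.exists_ciSup_eq {β ι : Type*} [ConditionallyCompleteLinearOrder β]
    [SemilatticeSup ι] {u : ι → β} (hu : Monotone u) (i₀ : ι)
    (hfin : (range u ∩ Ici (u i₀)).Finite) : ∃ N, ⨆ i, u i = u N := by
  obtain ⟨_, ⟨⟨N, rfl⟩, -⟩, hN⟩ :=
    exists_max_image _ id hfin ⟨u i₀, mem_range_self i₀, le_rfl⟩
  have hle : ∀ i, u i ≤ u N := fun i =>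
    (hu le_sup_left).trans (hN _ ⟨mem_range_self (i ⊔ i₀), hu le_sup_right⟩)
  have : Nonempty ι := ⟨i₀⟩
  exact ⟨N, le_antisymm (ciSup_le hle) (le_ciSup ⟨u N, forall_mem_range.2 hle⟩ N)⟩

theorem Real.finite_submonoidClosure_inter_Ici {s : Set ℝ} (hs : s.Finite)
    (hs01 : s ⊆ Icc 0 1) {δ : ℝ} (hδ : 0 < δ) :
    ((Submonoid.closure s : Set ℝ) ∩ Ici δ).Finite := by
  have := hs.fintype
  obtain ⟨K, hK⟩ : ∃ K : ℕ, ∀ x : s, x.1 < 1 → x.1 ^ K < δ :=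
    (eventually_all.2 fun x => eventually_imp_distrib_left.2 fun h1 =>
      (tendsto_pow_atTop_nhds_zero_of_lt_one (hs01 x.2).1 h1).eventually (gt_mem_nhds hδ)).exists
  refine ((finite_Iic fun _ : s => K).image fun n => ∏ x : s, x.1 ^ n x).subset ?_
  rintro y ⟨hy, hδy⟩
  obtain ⟨n, rfl⟩ := Submonoid.mem_closure_iff_of_fintype.1 hy
  -- Truncating the exponents at `K` changes nothing: `δ ≤ ∏ ≤ x ^ n x` forces `n x ≤ K` if `x < 1`.
  refine ⟨fun x => min (n x) K, fun x => min_le_right _ _, Finset.prod_congr rfl fun x _ => ?_⟩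
  obtain ⟨hx0, hx1⟩ := hs01 x.2
  rcases hx1.eq_or_lt with h1 | h1
  · simp [h1]
  · suffices n x ≤ K from congrArg _ (min_eq_left this)
    by_contra! hKn
    have hprod : ∏ y : s, y.1 ^ n y ≤ x.1 ^ n x := by
      simpa using Finset.prod_le_prod_of_subset_of_le_one (Finset.subset_univ {x})
        (fun y _ => pow_nonneg (hs01 y.2).1 _) fun y _ _ => pow_le_one₀ (hs01 y.2).1 (hs01 y.2).2
    have := pow_le_pow_of_le_one hx0 hx1 hKn.le
    linarith [hK x h1, mem_Ici.1 hδy]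

section BodyMin

variable {I J : α → ℝ}

lemma bodyMin_cons (I : α → ℝ) (b : α) (l : List α) :
    bodyMin I (b :: l) = min (I b) (bodyMin I l) := rfl

lemma bodyMin_nonneg (hI : ∀ a, 0 ≤ I a) (l : List α) : 0 ≤ bodyMin I l := by
  induction l with
  | nil => exact zero_le_one
  | cons b l ih => exact le_min (hI b) ih

lemma bodyMin_le_of_mem {l : List α} {b : α} (hb : b ∈ l) : bodyMin I l ≤ I b := by
  induction l with
  | nil => cases hb
  | cons x l ih =>
    rcases List.mem_cons.1 hb with rfl | hb
    · exact min_le_left _ _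
    · exact (min_le_right _ _).trans (ih hb)

lemma bodyMin_mono (h : ∀ a, I a ≤ J a) (l : List α) : bodyMin I l ≤ bodyMin J l := by
  induction l with
  | nil => exact le_rfl
  | cons b l ih => exact min_le_min (h b) ih

lemma bodyMin_mem {S : Submonoid ℝ} (hI : ∀ a, I a ∈ S) (l : List α) : bodyMin I l ∈ S := by
  induction l with
  | nil => exact S.one_mem
  | cons b l ih =>
    rw [bodyMin_cons]
    rcases min_choice (I b) (bodyMin I l) with h | h <;> rw [h]
    exacts [hI b, ih]

end BodyMin

section Chain

variable {P : Set (QClause α)}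

def clauseValues (P : Set (QClause α)) (I : α → ℝ) (a : α) : Set ℝ :=
  {x | ∃ c ∈ P, c.head = a ∧ x = c.factor * bodyMin I c.body}

lemma chain_succ (P : Set (QClause α)) (i : ℕ) (a : α) :
    chain P (i + 1) a = sSup (clauseValues P (chain P i) a) := rfl

lemma clauseValues_finite (hP : P.Finite) (I : α → ℝ) (a : α) :
    (clauseValues P I a).Finite :=
  (hP.image fun c => c.factor * bodyMin I c.body).subset fun _ ⟨c, hc, _, hx⟩ => ⟨c, hc, hx.symm⟩

lemma le_chain_succ (hP : P.Finite) {c : QClause α} (hc : c ∈ P) (i : ℕ) :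
    c.factor * bodyMin (chain P i) c.body ≤ chain P (i + 1) c.head :=
  le_csSup (clauseValues_finite hP _ _).bddAbove ⟨c, hc, rfl, rfl⟩

lemma chain_succ_eq_zero_or_exists (hP : P.Finite) (i : ℕ) (a : α) :
    chain P (i + 1) a = 0 ∨
      ∃ c ∈ P, c.head = a ∧ chain P (i + 1) a = c.factor * bodyMin (chain P i) c.body := by
  rw [chain_succ]
  rcases (clauseValues P (chain P i) a).eq_empty_or_nonempty with he | hne
  · exact Or.inl (he ▸ Real.sSup_empty)
  · exact Or.inr (hne.csSup_mem (clauseValues_finite hP _ _))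

lemma chain_nonneg (hP : QProgram P) (i : ℕ) (a : α) : 0 ≤ chain P i a := by
  induction i generalizing a with
  | zero => exact le_rfl
  | succ i ih =>
    exact Real.sSup_nonneg fun _ ⟨c, hc, _, hx⟩ =>
      hx ▸ mul_nonneg (hP.2 c hc).1.le (bodyMin_nonneg ih _)

lemma chain_mono (hP : QProgram P) (a : α) : Monotone fun i => chain P i a := by
  suffices h : ∀ i b, chain P i b ≤ chain P (i + 1) b from monotone_nat_of_le_succ (h · a)
  intro i
  induction i with
  | zero => exact chain_nonneg hP 1
  | succ i ih =>
    intro b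
    refine Real.sSup_le (fun _ ⟨c, hc, hb, hx⟩ => ?_) (chain_nonneg hP _ b)
    subst hb hx
    exact (mul_le_mul_of_nonneg_left (bodyMin_mono ih _) (hP.2 c hc).1.le).trans
      (le_chain_succ hP.1 hc _)

lemma chain_mem_closure (hP : QProgram P) (i : ℕ) (a : α) :
    chain P i a ∈ Submonoid.closure (insert 0 (QClause.factor '' P)) := by
  induction i generalizing a with
  | zero => exact Submonoid.subset_closure (mem_insert 0 _)
  | succ i ih =>
    rcases chain_succ_eq_zero_or_exists hP.1 i a with h0 | ⟨c, hc, -, hx⟩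
    · rw [h0]
      exact Submonoid.subset_closure (mem_insert 0 _)
    · exact hx ▸ Submonoid.mul_mem _
        (Submonoid.subset_closure (mem_insert_of_mem 0 ⟨c, hc, rfl⟩)) (bodyMin_mem ih _)

lemma finite_range_chain_inter_Ici (hP : QProgram P) (a : α) {δ : ℝ} (hδ : 0 < δ) :
    (range (fun i => chain P i a) ∩ Ici δ).Finite := by
  have hfactors : insert 0 (QClause.factor '' P) ⊆ Icc 0 1 := by
    rintro _ (rfl | ⟨c, hc, rfl⟩)
    · exact ⟨le_rfl, zero_le_one⟩
    · exact ⟨(hP.2 c hc).1.le, (hP.2 c hc).2⟩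
  refine (Real.finite_submonoidClosure_inter_Ici ((hP.1.image _).insert 0) hfactors hδ).subset ?_
  rintro _ ⟨⟨i, rfl⟩, hδi⟩
  exact ⟨chain_mem_closure hP i a, hδi⟩

lemma derives_chain_of_pos (hP : QProgram P) {i : ℕ} {a : α} (hpos : 0 < chain P i a) :
    Derives P a (chain P i a) := by
  induction i generalizing a with
  | zero => exact absurd hpos (lt_irrefl 0)
  | succ i ih =>
    rcases chain_succ_eq_zero_or_exists hP.1 i a with h0 | ⟨c, hc, rfl, hx⟩
    · exact absurd h0 hpos.ne'
    have hbody : 0 < bodyMin (chain P i) c.body :=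
      pos_of_mul_pos_right (hx ▸ hpos) (hP.2 c hc).1.le
    rw [hx]
    refine Derives.step c hc (c.body.map (chain P i)) (List.length_map _) fun j hj _ => ?_
    simp only [List.get_eq_getElem, List.getElem_map]
    exact ih (hbody.trans_le (bodyMin_le_of_mem (List.getElem_mem hj)))

end Chain

/-- Completeness: if the minimal model value of `a` is positive, then it is
derivable at exactly that value. -/
theorem stmt_10 (P : Set (QClause α)) (hP : QProgram P) (a : α)
    (hpos : 0 < ⨆ i : ℕ, chain P i a) :
    Derives P a (⨆ i : ℕ, chain P i a) := by
  obtain ⟨i₀, hi₀⟩ := exists_lt_of_lt_ciSup hpos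
  obtain ⟨N, hN⟩ := (chain_mono hP a).exists_ciSup_eq i₀ (finite_range_chain_inter_Ici hP a hi₀)
  rw [hN] at hpos ⊢
  exact derives_chain_of_pos hP hpos
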